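/- arXiv:2212.13725 — 6 statements merged into one kernel-verified Lean document; each statement's English description precedes it below -/
import Mathlib

section
/- Let 1 ≤ τ ≤ k. For every Z ⊆ V with |Z| ≤ τ, it holds that g_τ(σ*(V,k,τ)) ≤ f(σ*(V∖Z, k−τ, 0)), where f(σ*(V∖Z, k−τ, 0)) is the maximum of f over duplicate-free sequences of length at most k−τ whose elements lie in V∖Z. -/
open Finset

namespace RoseNets

variable {V : Type*} [Fintype V] [DecidableEq V]

/-- The edge set induced by a sequence `σ`: all edges `(u,v) ∈ E` with `u` occurring
strictly before `v` in `σ`, together with all self-loops `(v,v) ∈ E` with `v ∈ σ`. -/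
def inducedEdges (E : Finset (V × V)) (σ : List V) : Finset (V × V) :=
  E.filter fun e =>
    (∃ i j : Fin σ.length, i < j ∧ σ.get i = e.1 ∧ σ.get j = e.2) ∨
      (e.1 = e.2 ∧ e.1 ∈ σ)

/-- The networked submodular objective `f(σ) = h(E(σ))`. -/
def fval (E : Finset (V × V)) (h : Finset (V × V) → ℝ) (σ : List V) : ℝ :=
  h (inducedEdges E σ)

/-- Maximum in-degree of the graph. -/
def dIn (E : Finset (V × V)) : ℕ :=
  Finset.univ.sup fun v => (E.filter fun e => e.2 = v).card

/-- Maximum out-degree of the graph. -/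
def dOut (E : Finset (V × V)) : ℕ :=
  Finset.univ.sup fun v => (E.filter fun e => e.1 = v).card

/-- The robust objective `g_τ(σ) = min_{Z ⊆ V, |Z| ≤ τ} f(σ − Z)`. -/
noncomputable def gRob (E : Finset (V × V)) (h : Finset (V × V) → ℝ) (τ : ℕ)
    (σ : List V) : ℝ :=
  ((Finset.univ : Finset V).powerset.filter fun Z => Z.card ≤ τ).inf'
    ⟨∅, by simp⟩ fun Z => fval E h (σ.filter fun v => v ∉ Z)

/-- Marginal gain of an edge with respect to an edge set: `h(e|S) = h(S ∪ {e}) − h(S)`. -/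
def marg (h : Finset (V × V) → ℝ) (S : Finset (V × V)) (e : V × V) : ℝ :=
  h (insert e S) - h S

/-- Candidate edges for a Sequence Greedy step over ground set `U`. -/
def candidates (E : Finset (V × V)) (U : Finset V) (σ : List V) : Finset (V × V) :=
  E.filter fun e => e.1 ∈ U ∧ e.2 ∈ U ∧ e.2 ∉ σ

/-- Candidate edges when only one slot remains: the tail must already be selected,
or the edge is a self-loop. -/
def lastCandidates (E : Finset (V × V)) (U : Finset V) (σ : List V) : Finset (V × V) :=
  (candidates E U σ).filter fun e => e.1 = e.2 ∨ e.1 ∈ σ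

/-- One step of Sequence Greedy with budget `m` over ground set `U`. -/
inductive GreedyStep (E : Finset (V × V)) (h : Finset (V × V) → ℝ) (U : Finset V) (m : ℕ) :
    List V → List V → Prop
  | normal (σ : List V) (e : V × V) (hlen : σ.length + 1 < m)
      (hmem : e ∈ candidates E U σ)
      (hmax : ∀ e' ∈ candidates E U σ,
        marg h (inducedEdges E σ) e' ≤ marg h (inducedEdges E σ) e) :
      GreedyStep E h U m σ
        (if e.1 = e.2 ∨ e.1 ∈ σ then σ ++ [e.2] else σ ++ [e.1, e.2])
  | last (σ : List V) (e : V × V) (hlen : σ.length + 1 = m)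
      (hmem : e ∈ lastCandidates E U σ)
      (hmax : ∀ e' ∈ lastCandidates E U σ,
        marg h (inducedEdges E σ) e' ≤ marg h (inducedEdges E σ) e) :
      GreedyStep E h U m σ (σ ++ [e.2])

/-- `σ` is a possible output of Sequence Greedy with budget `m` over ground set `U`. -/
def IsGreedyOutput (E : Finset (V × V)) (h : Finset (V × V) → ℝ) (U : Finset V) (m : ℕ)
    (σ : List V) : Prop :=
  Relation.ReflTransGen (GreedyStep E h U m) [] σ ∧ σ.length = m

/-- `σ` is a possible output of the RoseNets algorithm with parameters `(k, τ)`. -/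
def IsRoseNetsOutput (E : Finset (V × V)) (h : Finset (V × V) → ℝ) (k τ : ℕ)
    (σ : List V) : Prop :=
  ∃ σ1 σ2 : List V,
    IsGreedyOutput E h Finset.univ τ σ1 ∧
    IsGreedyOutput E h (Finset.univ \ σ1.toFinset) (k - τ) σ2 ∧
    σ = σ1 ++ σ2


/-- Lemma 3: for any removal set `Z` of size at most `τ`, the robust optimum with
parameters `(k, τ)` is at most the non-robust optimum over `V ∖ Z` with budget `k − τ`. -/
theorem rosenets_lemma3
    (E : Finset (V × V)) (h : Finset (V × V) → ℝ)
    (h0 : h ∅ = 0) (hnn : ∀ S ⊆ E, 0 ≤ h S)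
    (hmono : ∀ A B : Finset (V × V), A ⊆ B → B ⊆ E → h A ≤ h B)
    (hsubmod : ∀ A B : Finset (V × V), A ⊆ B → B ⊆ E → ∀ e ∈ E, e ∉ B →
      h (insert e B) - h B ≤ h (insert e A) - h A)
    (k τ : ℕ) (hτ1 : 1 ≤ τ) (hτk : τ ≤ k)
    (σstar : List V) (hstar_nodup : σstar.Nodup) (hstar_len : σstar.length ≤ k)
    (hstar_opt : ∀ ρ : List V, ρ.Nodup → ρ.length ≤ k → gRob E h τ ρ ≤ gRob E h τ σstar)
    (Z : Finset V) (hZ : Z.card ≤ τ)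
    (ρstar : List V) (hρ_nodup : ρstar.Nodup) (hρ_len : ρstar.length ≤ k - τ)
    (hρ_avoid : ∀ v ∈ ρstar, v ∉ Z)
    (hρ_opt : ∀ ρ : List V, ρ.Nodup → ρ.length ≤ k - τ → (∀ v ∈ ρ, v ∉ Z) →
      fval E h ρ ≤ fval E h ρstar) :
    gRob E h τ σstar ≤ fval E h ρstar := by
  classical
  set A : Finset V := σstar.toFinset ∩ Z with hA
  set m : ℕ := max A.card (σstar.length - (k - τ)) with hm
  have hcard : σstar.toFinset.card = σstar.length := List.toFinset_card_of_nodup hstar_nodup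
  have hAsub : A ⊆ σstar.toFinset := Finset.inter_subset_left
  have hAm : A.card ≤ m := le_max_left _ _
  have hmt : m ≤ σstar.toFinset.card := by
    rw [hcard]
    exact max_le (hcard ▸ Finset.card_le_card hAsub) (Nat.sub_le _ _)
  obtain ⟨Z', hAZ', hZ'sub, hZ'card⟩ :=
    Finset.exists_subsuperset_card_eq hAsub hAm hmt
  have hZ'τ : Z'.card ≤ τ := by
    rw [hZ'card, hm]
    apply max_le
    · exact le_trans (Finset.card_le_card Finset.inter_subset_right) hZ
    · calc σstar.length - (k - τ) ≤ k - (k - τ) := Nat.sub_le_sub_right hstar_len _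
        _ = τ := Nat.sub_sub_self hτk
  set ρ : List V := σstar.filter (fun v => v ∉ Z') with hρ
  have hρnodup : ρ.Nodup := hstar_nodup.filter _
  have hρfin : ρ.toFinset = σstar.toFinset \ Z' := by
    rw [hρ, List.toFinset_filter, Finset.sdiff_eq_filter]
    simp
  have hρlen : ρ.length ≤ k - τ := by
    have : ρ.length = σstar.toFinset.card - Z'.card := by
      rw [← List.toFinset_card_of_nodup hρnodup, hρfin,
        Finset.card_sdiff_of_subset hZ'sub]
    rw [this, hcard, hZ'card]
    rw [Nat.sub_le_iff_le_add]
    calc σstar.length ≤ (σstar.length - (k - τ)) + (k - τ) := by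
          omega
      _ ≤ m + (k - τ) := by
          exact Nat.add_le_add_right (le_max_right _ _) _
      _ = (k - τ) + m := Nat.add_comm _ _
  have hρavoid : ∀ v ∈ ρ, v ∉ Z := by
    intro v hv hvZ
    rw [hρ, List.mem_filter] at hv
    have hv1 : v ∈ σstar.toFinset := List.mem_toFinset.mpr hv.1
    have : v ∈ A := Finset.mem_inter.mpr ⟨hv1, hvZ⟩
    have := hAZ' this
    simp at hv
    exact hv.2 this
  have h1 : gRob E h τ σstar ≤ fval E h ρ := by
    apply Finset.inf'_le
    simp only [Finset.mem_filter, Finset.mem_powerset]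
    exact ⟨Finset.subset_univ _, hZ'τ⟩
  exact le_trans h1 (hρ_opt ρ hρnodup hρlen hρavoid)

end RoseNets
end

section
/- Let σ1 and σ2 be duplicate-free sequences over V with disjoint element sets, and set E1 = E(σ1) and E2 = E(σ1 ⊕ σ2) ∖ E(σ1). If E2 is nonempty, then there exists an edge e ∈ E2 such that h(E1 ∪ {e}) − h(E1) ≥ (1/|E2|) · f(σ2|σ1). -/
open Finset

namespace RoseNets

variable {V : Type*} [Fintype V] [DecidableEq V]

lemma inducedEdges_subset_append (E : Finset (V × V)) (σ τ : List V) :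
    inducedEdges E σ ⊆ inducedEdges E (σ ++ τ) := by
  intro e he
  simp only [inducedEdges, Finset.mem_filter] at he ⊢
  refine ⟨he.1, ?_⟩
  rcases he.2 with ⟨i, j, hij, hi, hj⟩ | ⟨h12, hmem⟩
  · left
    have hlen : σ.length ≤ (σ ++ τ).length := by simp
    refine ⟨Fin.castLE hlen i, Fin.castLE hlen j, by simpa using hij, ?_, ?_⟩
    · rw [← hi]
      simp [List.get_eq_getElem, List.getElem_append_left]
    · rw [← hj]
      simp [List.get_eq_getElem, List.getElem_append_left]
  · exact Or.inr ⟨h12, by simp [hmem]⟩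

lemma submod_sum_bound (E : Finset (V × V)) (h : Finset (V × V) → ℝ)
    (hsubmod : ∀ A B : Finset (V × V), A ⊆ B → B ⊆ E → ∀ e ∈ E, e ∉ B →
      h (insert e B) - h B ≤ h (insert e A) - h A)
    (S : Finset (V × V)) (hS : S ⊆ E) :
    ∀ T : Finset (V × V), T ⊆ E →
      h (S ∪ T) - h S ≤ ∑ e ∈ T, (h (insert e S) - h S) := by
  intro T
  induction T using Finset.induction_on with
  | empty => simp
  | @insert a T haT ih =>
    intro hsub
    have hTE : T ⊆ E := (Finset.subset_insert a T).trans hsub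
    have haE : a ∈ E := hsub (Finset.mem_insert_self a T)
    rw [Finset.sum_insert haT]
    have key : h (S ∪ insert a T) - h (S ∪ T) ≤ h (insert a S) - h S := by
      by_cases haST : a ∈ S ∪ T
      · have ha1 : S ∪ insert a T = S ∪ T := by
          rw [Finset.union_insert, Finset.insert_eq_self.mpr haST]
        have haS : a ∈ S := by
          rcases Finset.mem_union.mp haST with hh | hh
          · exact hh
          · exact absurd hh haT
        rw [ha1, Finset.insert_eq_self.mpr haS]
        simp
      · have := hsubmod S (S ∪ T) Finset.subset_union_left
          (Finset.union_subset hS hTE) a haE haST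
        rw [Finset.union_insert]
        exact this
    have := ih hTE
    linarith

/-- Edge-level version of Lemma 1: some edge of `E2 = E(σ1 ⊕ σ2) ∖ E(σ1)` captures at
least a `1/|E2|` fraction of the marginal gain `f(σ2|σ1)`. -/
theorem rosenets_lemma1_edges
    (E : Finset (V × V)) (h : Finset (V × V) → ℝ)
    (h0 : h ∅ = 0) (hnn : ∀ S ⊆ E, 0 ≤ h S)
    (hmono : ∀ A B : Finset (V × V), A ⊆ B → B ⊆ E → h A ≤ h B)
    (hsubmod : ∀ A B : Finset (V × V), A ⊆ B → B ⊆ E → ∀ e ∈ E, e ∉ B →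
      h (insert e B) - h B ≤ h (insert e A) - h A)
    (σ1 σ2 : List V) (h1 : σ1.Nodup) (h2 : σ2.Nodup)
    (hdisj : ∀ v ∈ σ1, v ∉ σ2)
    (hne : (inducedEdges E (σ1 ++ σ2) \ inducedEdges E σ1).Nonempty) :
    ∃ e ∈ inducedEdges E (σ1 ++ σ2) \ inducedEdges E σ1,
      h (insert e (inducedEdges E σ1)) - h (inducedEdges E σ1) ≥
        (1 / ((inducedEdges E (σ1 ++ σ2) \ inducedEdges E σ1).card : ℝ)) *
          (fval E h (σ1 ++ σ2) - fval E h σ1) := by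
  classical
  set S := inducedEdges E σ1 with hSdef
  set D := inducedEdges E (σ1 ++ σ2) \ inducedEdges E σ1 with hDdef
  have hSE : S ⊆ E := Finset.filter_subset _ _
  have hDE : D ⊆ E := (Finset.sdiff_subset).trans (Finset.filter_subset _ _)
  have hsubset : S ⊆ inducedEdges E (σ1 ++ σ2) := inducedEdges_subset_append E σ1 σ2
  have hunion : S ∪ D = inducedEdges E (σ1 ++ σ2) := Finset.union_sdiff_of_subset hsubset
  obtain ⟨e, heD, hemax⟩ := Finset.exists_max_image D (fun e => h (insert e S) - h S) hne
  refine ⟨e, heD, ?_⟩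
  have hsum : h (S ∪ D) - h S ≤ ∑ x ∈ D, (h (insert x S) - h S) :=
    submod_sum_bound E h hsubmod S hSE D hDE
  have hsum2 : ∑ x ∈ D, (h (insert x S) - h S) ≤ D.card * (h (insert e S) - h S) := by
    calc ∑ x ∈ D, (h (insert x S) - h S) ≤ ∑ _x ∈ D, (h (insert e S) - h S) :=
          Finset.sum_le_sum fun x hx => hemax x hx
      _ = D.card * (h (insert e S) - h S) := by
          rw [Finset.sum_const, nsmul_eq_mul]
  have hcard : (0 : ℝ) < D.card := by
    exact_mod_cast Finset.card_pos.mpr hne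
  have hf : fval E h (σ1 ++ σ2) - fval E h σ1 = h (S ∪ D) - h S := by
    rw [fval, fval, hunion]
  rw [ge_iff_le, hf]
  rw [div_mul_eq_mul_div, one_mul, div_le_iff₀ hcard]
  calc h (S ∪ D) - h S ≤ ∑ x ∈ D, (h (insert x S) - h S) := hsum
    _ ≤ D.card * (h (insert e S) - h S) := hsum2
    _ = (h (insert e S) - h S) * D.card := mul_comm _ _

end RoseNets
end

section
/- Let A > 1 and m ≥ 1 be reals and set β = 1 + m. Then for every real q with 0 < q ≤ 1/m: max{ q·(A−1)/(A−q), (1 − m·q)·(A−1)/(A−q) } ≥ (A−1)/(β·A − 1). -/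
/-- Inequality 4 in the proof of Theorem 1: for `A > 1`, `m ≥ 1`, `β = 1 + m` and
`0 < q ≤ 1/m`, `max{q·(A−1)/(A−q), (1−m·q)·(A−1)/(A−q)} ≥ (A−1)/(β·A − 1)`. -/
theorem max_ratio_ge (A m : ℝ) (hA : 1 < A) (hm : 1 ≤ m)
    (q : ℝ) (hq0 : 0 < q) (hq : q ≤ 1 / m) :
    max (q * (A - 1) / (A - q)) ((1 - m * q) * (A - 1) / (A - q)) ≥
      (A - 1) / ((1 + m) * A - 1) := by
  have hm0 : (0:ℝ) < m := by linarith
  have hq1 : q ≤ 1 := le_trans hq (by rw [div_le_one hm0]; linarith)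
  have hAq : 0 < A - q := by linarith
  have hβ : 0 < (1 + m) * A - 1 := by nlinarith
  have hA1 : 0 < A - 1 := by linarith
  have hβm : (0:ℝ) < 1 + m := by linarith
  rcases le_or_gt (1 / (1 + m)) q with h | h
  · refine le_max_of_le_left ?_
    rw [div_le_div_iff₀ hβ hAq]
    have h1 : 1 ≤ q * (1 + m) := by
      rw [div_le_iff₀ hβm] at h; linarith
    nlinarith [mul_nonneg (by linarith : (0:ℝ) ≤ q*(1+m)-1) (by linarith : (0:ℝ) ≤ A), mul_nonneg hA1.le (by nlinarith : (0:ℝ) ≤ q*(1+m)*A - A)]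
  · refine le_max_of_le_right ?_
    rw [div_le_div_iff₀ hβ hAq]
    have h1 : q * (1 + m) ≤ 1 := by
      rw [lt_div_iff₀ hβm] at h; linarith
    nlinarith [mul_nonneg (by linarith : (0:ℝ) ≤ 1 - q * (1 + m))
      (by nlinarith : (0:ℝ) ≤ m * ((1 + m) * A - 1) - 1)]
end

section
/- Let σ = σ^1 ⊕ ⟨z⟩ ⊕ σ^2 be a duplicate-free sequence over V. Then f(σ) − f(σ^1 ⊕ σ^2) ≤ d_in · max{ h({(u,z)}) : (u,z) ∈ E } + d_out · max{ h({(z,u)}) : (z,u) ∈ E }, where each maximum is taken to be 0 if the corresponding set of edges is empty. -/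
open Finset

namespace RoseNets

variable {V : Type*} [Fintype V] [DecidableEq V]

/-- Largest single-edge utility among the incoming edges of `z` (0 if there are none). -/
noncomputable def maxInUtility (E : Finset (V × V)) (h : Finset (V × V) → ℝ) (z : V) : ℝ :=
  if hne : (E.filter fun e => e.2 = z).Nonempty then
    (E.filter fun e => e.2 = z).sup' hne fun e => h {e}
  else 0

/-- Largest single-edge utility among the outgoing edges of `z` (0 if there are none). -/
noncomputable def maxOutUtility (E : Finset (V × V)) (h : Finset (V × V) → ℝ) (z : V) : ℝ :=
  if hne : (E.filter fun e => e.1 = z).Nonempty then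
    (E.filter fun e => e.1 = z).sup' hne fun e => h {e}
  else 0

/-- `u` occurs strictly before `v` in `σ`, phrased via `take`/`drop`. -/
def Before (σ : List V) (u v : V) : Prop :=
  ∃ n, u ∈ σ.take n ∧ v ∈ σ.drop n

lemma before_iff_get (σ : List V) (u v : V) :
    (∃ i j : Fin σ.length, i < j ∧ σ.get i = u ∧ σ.get j = v) ↔ Before σ u v := by
  constructor
  · rintro ⟨i, j, hij, hu, hv⟩
    refine ⟨(i : ℕ) + 1, ?_, ?_⟩
    · have h1 : ((i : ℕ)) < (σ.take ((i : ℕ) + 1)).length := by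
        simp only [List.length_take]; omega
      have : (σ.take ((i : ℕ) + 1))[(i : ℕ)] = u := by
        rw [List.getElem_take]
        simpa [List.get_eq_getElem] using hu
      exact this ▸ List.getElem_mem h1
    · have hj : (i : ℕ) + 1 + ((j : ℕ) - ((i : ℕ) + 1)) = (j : ℕ) := by omega
      have h2 : ((j : ℕ) - ((i : ℕ) + 1)) < (σ.drop ((i : ℕ) + 1)).length := by
        simp only [List.length_drop]; omega
      have : (σ.drop ((i : ℕ) + 1))[(j : ℕ) - ((i : ℕ) + 1)] = v := by
        rw [List.getElem_drop]
        have hcg : σ[(i : ℕ) + 1 + ((j : ℕ) - ((i : ℕ) + 1))]'(by omega) =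
            σ[(j : ℕ)]'j.isLt := by congr 1
        rw [hcg]
        simpa [List.get_eq_getElem] using hv
      exact this ▸ List.getElem_mem h2
  · rintro ⟨n, hu, hv⟩
    obtain ⟨i, hi, hiu⟩ := List.getElem_of_mem hu
    obtain ⟨k, hk, hkv⟩ := List.getElem_of_mem hv
    rw [List.getElem_take] at hiu
    rw [List.getElem_drop] at hkv
    have hilen : i < σ.length := by
      have := hi; simp [List.length_take] at this; omega
    have hklen : n + k < σ.length := by
      have := hk; simp [List.length_drop] at this; omega
    have hin : i < n := by
      have := hi; simp [List.length_take] at this; omega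
    exact ⟨⟨i, hilen⟩, ⟨n + k, hklen⟩, by simp; omega,
      by simpa [List.get_eq_getElem] using hiu, by simpa [List.get_eq_getElem] using hkv⟩

lemma before_append (σ1 σ2 : List V) (u v : V) :
    Before (σ1 ++ σ2) u v ↔
      Before σ1 u v ∨ Before σ2 u v ∨ (u ∈ σ1 ∧ v ∈ σ2) := by
  constructor
  · rintro ⟨n, hu, hv⟩
    rw [List.take_append, List.mem_append] at hu
    rw [List.drop_append, List.mem_append] at hv
    rcases hu with hu | hu
    · rcases hv with hv | hv
      · exact Or.inl ⟨n, hu, hv⟩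
      · exact Or.inr (Or.inr ⟨List.mem_of_mem_take hu, List.mem_of_mem_drop hv⟩)
    · have hpos : 0 < n - σ1.length := by
        by_contra hc
        push_neg at hc
        interval_cases h : (n - σ1.length) <;> simp_all
      have hdrop : σ1.drop n = [] := by
        apply List.drop_eq_nil_of_le; omega
      rcases hv with hv | hv
      · rw [hdrop] at hv; simp at hv
      · exact Or.inr (Or.inl ⟨n - σ1.length, hu, hv⟩)
  · rintro (⟨n, hu, hv⟩ | ⟨n, hu, hv⟩ | ⟨hu, hv⟩)
    · refine ⟨n, ?_, ?_⟩
      · rw [List.take_append, List.mem_append]; exact Or.inl hu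
      · rw [List.drop_append, List.mem_append]; exact Or.inl hv
    · refine ⟨σ1.length + n, ?_, ?_⟩
      · rw [List.take_append, List.mem_append]
        right; simpa using hu
      · rw [List.drop_append, List.mem_append]
        right; simpa using hv
    · refine ⟨σ1.length, ?_, ?_⟩
      · rw [List.take_append, List.mem_append]
        left; simpa using hu
      · rw [List.drop_append, List.mem_append]
        right; simpa using hv

lemma not_before_singleton (z u v : V) : ¬ Before [z] u v := by
  rintro ⟨n, hu, hv⟩
  match n with
  | 0 => simp at hu
  | Nat.succ m => simp at hv

lemma mem_inducedEdges (E : Finset (V × V)) (σ : List V) (e : V × V) :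
    e ∈ inducedEdges E σ ↔ e ∈ E ∧ (Before σ e.1 e.2 ∨ (e.1 = e.2 ∧ e.1 ∈ σ)) := by
  simp only [inducedEdges, Finset.mem_filter, before_iff_get]

/-- Telescoping submodularity bound. -/
lemma h_union_sub_le (E : Finset (V × V)) (h : Finset (V × V) → ℝ) (h0 : h ∅ = 0)
    (hsubmod : ∀ A B : Finset (V × V), A ⊆ B → B ⊆ E → ∀ e ∈ E, e ∉ B →
      h (insert e B) - h B ≤ h (insert e A) - h A)
    (A : Finset (V × V)) :
    ∀ D : Finset (V × V), Disjoint A D → A ∪ D ⊆ E →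
      h (A ∪ D) - h A ≤ ∑ e ∈ D, h {e} := by
  intro D
  induction D using Finset.induction_on with
  | empty => intro _ _; simp
  | @insert a s ha ih =>
    intro hdisj hsub
    have hdisj' : Disjoint A s := hdisj.mono_right (Finset.subset_insert a s)
    have hsub' : A ∪ s ⊆ E :=
      (Finset.union_subset_union_right (Finset.subset_insert a s)).trans hsub
    have haE : a ∈ E := hsub (by simp)
    have haAs : a ∉ A ∪ s := by
      simp only [Finset.mem_union, not_or]
      exact ⟨Finset.disjoint_right.mp hdisj (by simp), ha⟩
    have key : h (insert a (A ∪ s)) - h (A ∪ s) ≤ h {a} := by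
      have := hsubmod ∅ (A ∪ s) (Finset.empty_subset _) hsub' a haE haAs
      simpa [h0] using this
    have heq : A ∪ insert a s = insert a (A ∪ s) := by
      ext x; simp [or_left_comm, or_comm]
    rw [heq, Finset.sum_insert ha]
    have := ih hdisj' hsub'
    linarith

lemma maxInUtility_nonneg (E : Finset (V × V)) (h : Finset (V × V) → ℝ)
    (hnn : ∀ S ⊆ E, 0 ≤ h S) (z : V) : 0 ≤ maxInUtility E h z := by
  unfold maxInUtility
  split
  · next hne =>
    obtain ⟨e, he⟩ := hne
    refine le_trans ?_ (Finset.le_sup' (fun e => h {e}) he)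
    exact hnn {e} (by simpa using (Finset.mem_filter.mp he).1)
  · exact le_refl 0

lemma maxOutUtility_nonneg (E : Finset (V × V)) (h : Finset (V × V) → ℝ)
    (hnn : ∀ S ⊆ E, 0 ≤ h S) (z : V) : 0 ≤ maxOutUtility E h z := by
  unfold maxOutUtility
  split
  · next hne =>
    obtain ⟨e, he⟩ := hne
    refine le_trans ?_ (Finset.le_sup' (fun e => h {e}) he)
    exact hnn {e} (by simpa using (Finset.mem_filter.mp he).1)
  · exact le_refl 0

/-- Equation (4) in the proof of Theorem 1: the loss from removing a single element `z`
from a sequence is at most `d_in` times the largest incoming single-edge utility of `z`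
plus `d_out` times the largest outgoing single-edge utility of `z`. -/
theorem single_removal_loss_bound
    (E : Finset (V × V)) (h : Finset (V × V) → ℝ)
    (h0 : h ∅ = 0) (hnn : ∀ S ⊆ E, 0 ≤ h S)
    (hmono : ∀ A B : Finset (V × V), A ⊆ B → B ⊆ E → h A ≤ h B)
    (hsubmod : ∀ A B : Finset (V × V), A ⊆ B → B ⊆ E → ∀ e ∈ E, e ∉ B →
      h (insert e B) - h B ≤ h (insert e A) - h A)
    (σ1 σ2 : List V) (z : V) (hnodup : (σ1 ++ z :: σ2).Nodup) :
    fval E h (σ1 ++ z :: σ2) - fval E h (σ1 ++ σ2) ≤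
      (dIn E : ℝ) * maxInUtility E h z + (dOut E : ℝ) * maxOutUtility E h z := by
  classical
  set A := inducedEdges E (σ1 ++ σ2) with hA
  set B := inducedEdges E (σ1 ++ z :: σ2) with hB
  have hBE : B ⊆ E := Finset.filter_subset _ _
  have hAE : A ⊆ E := Finset.filter_subset _ _
  -- A ⊆ B
  have hAB : A ⊆ B := by
    intro e he
    rw [mem_inducedEdges] at he ⊢
    refine ⟨he.1, ?_⟩
    rcases he.2 with hb | ⟨hself, hmem⟩
    · left
      rw [before_append] at hb
      rw [show z :: σ2 = [z] ++ σ2 from rfl, before_append, before_append]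
      rcases hb with hb | hb | ⟨hu, hv⟩
      · exact Or.inl hb
      · exact Or.inr (Or.inl (Or.inr (Or.inl hb)))
      · exact Or.inr (Or.inr ⟨hu, by simp [hv]⟩)
    · right
      refine ⟨hself, ?_⟩
      simp only [List.mem_append, List.mem_cons] at hmem ⊢
      tauto
  -- every edge in B \ A touches z
  have htouch : ∀ e ∈ B \ A, e.1 = z ∨ e.2 = z := by
    intro e he
    rw [Finset.mem_sdiff] at he
    by_contra hc
    push_neg at hc
    obtain ⟨h1, h2⟩ := hc
    apply he.2
    have heB := (mem_inducedEdges E _ e).mp he.1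
    rw [mem_inducedEdges]
    refine ⟨heB.1, ?_⟩
    rcases heB.2 with hb | ⟨hself, hmem⟩
    · left
      rw [show z :: σ2 = [z] ++ σ2 from rfl, before_append, before_append] at hb
      rw [before_append]
      rcases hb with hb | (hb | hb | ⟨hu, hv⟩) | ⟨hu, hv⟩
      · exact Or.inl hb
      · exact absurd hb (not_before_singleton z e.1 e.2)
      · exact Or.inr (Or.inl hb)
      · simp at hu; exact absurd hu h1
      · simp at hv
        rcases hv with hv | hv
        · exact absurd hv h2
        · exact Or.inr (Or.inr ⟨hu, hv⟩)
    · right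
      refine ⟨hself, ?_⟩
      simp only [List.mem_append, List.mem_cons] at hmem ⊢
      rcases hmem with hm | hm | hm
      · exact Or.inl hm
      · exact absurd hm h1
      · exact Or.inr hm
  -- telescoping bound
  have hBeq : A ∪ (B \ A) = B := Finset.union_sdiff_of_subset hAB
  have htel : h B - h A ≤ ∑ e ∈ B \ A, h {e} := by
    have := h_union_sub_le E h h0 hsubmod A (B \ A) Finset.disjoint_sdiff
      (by rw [hBeq]; exact hBE)
    rwa [hBeq] at this
  -- split the sum
  set D := B \ A with hD
  have hDE : D ⊆ E := (Finset.sdiff_subset).trans hBE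
  have hsplit : ∑ e ∈ D, h {e} =
      (∑ e ∈ D.filter (fun e => e.2 = z), h {e}) +
      (∑ e ∈ D.filter (fun e => ¬ e.2 = z), h {e}) :=
    (Finset.sum_filter_add_sum_filter_not D _ _).symm
  -- in-edge part
  have hin : (∑ e ∈ D.filter (fun e => e.2 = z), h {e}) ≤
      (dIn E : ℝ) * maxInUtility E h z := by
    set F := D.filter (fun e => e.2 = z) with hF
    have hFsub : F ⊆ E.filter (fun e => e.2 = z) := by
      intro e he
      rw [Finset.mem_filter] at he ⊢
      exact ⟨hDE he.1, he.2⟩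
    have hcard : F.card ≤ dIn E := by
      refine le_trans (Finset.card_le_card hFsub) ?_
      exact Finset.le_sup (f := fun v => (E.filter fun e => e.2 = v).card)
        (Finset.mem_univ z)
    have hbound : ∀ e ∈ F, h {e} ≤ maxInUtility E h z := by
      intro e he
      have hne : (E.filter fun e => e.2 = z).Nonempty := ⟨e, hFsub he⟩
      rw [maxInUtility, dif_pos hne]
      exact Finset.le_sup' (fun e => h {e}) (hFsub he)
    calc (∑ e ∈ F, h {e}) ≤ F.card • maxInUtility E h z :=
          Finset.sum_le_card_nsmul F _ _ hbound
      _ = (F.card : ℝ) * maxInUtility E h z := by rw [nsmul_eq_mul]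
      _ ≤ (dIn E : ℝ) * maxInUtility E h z := by
          apply mul_le_mul_of_nonneg_right _ (maxInUtility_nonneg E h hnn z)
          exact_mod_cast hcard
  -- out-edge part
  have hout : (∑ e ∈ D.filter (fun e => ¬ e.2 = z), h {e}) ≤
      (dOut E : ℝ) * maxOutUtility E h z := by
    set F := D.filter (fun e => ¬ e.2 = z) with hF
    have hFsub : F ⊆ E.filter (fun e => e.1 = z) := by
      intro e he
      rw [Finset.mem_filter] at he ⊢
      refine ⟨hDE he.1, ?_⟩
      rcases htouch e he.1 with h1 | h2
      · exact h1
      · exact absurd h2 he.2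
    have hcard : F.card ≤ dOut E := by
      refine le_trans (Finset.card_le_card hFsub) ?_
      exact Finset.le_sup (f := fun v => (E.filter fun e => e.1 = v).card)
        (Finset.mem_univ z)
    have hbound : ∀ e ∈ F, h {e} ≤ maxOutUtility E h z := by
      intro e he
      have hne : (E.filter fun e => e.1 = z).Nonempty := ⟨e, hFsub he⟩
      rw [maxOutUtility, dif_pos hne]
      exact Finset.le_sup' (fun e => h {e}) (hFsub he)
    calc (∑ e ∈ F, h {e}) ≤ F.card • maxOutUtility E h z :=
          Finset.sum_le_card_nsmul F _ _ hbound
      _ = (F.card : ℝ) * maxOutUtility E h z := by rw [nsmul_eq_mul]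
      _ ≤ (dOut E : ℝ) * maxOutUtility E h z := by
          apply mul_le_mul_of_nonneg_right _ (maxOutUtility_nonneg E h hnn z)
          exact_mod_cast hcard
  have : fval E h (σ1 ++ z :: σ2) - fval E h (σ1 ++ σ2) = h B - h A := rfl
  rw [this]
  linarith

end RoseNets
end

section
/- Let k ≥ 1 and d_in ≥ 1. Let ρ be a duplicate-free sequence over V and suppose an element v ∉ ρ is appended to ρ via an edge e ∈ E with head v such that h(e|E(ρ)) ≥ h(e'|E(ρ)) for every edge e' ∈ E whose head does not lie in ρ, and f(v|ρ) ≥ h(e|E(ρ)). Then for every duplicate-free sequence σ* of length at most k whose elements are disjoint from those of ρ: f(v|ρ) ≥ (1/(d_in·k)) · (f(σ*) − f(ρ)). -/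
open Finset

namespace RoseNets

variable {V : Type*} [Fintype V] [DecidableEq V]

lemma tele_bound (E : Finset (V × V)) (h : Finset (V × V) → ℝ)
    (hsubmod : ∀ A B : Finset (V × V), A ⊆ B → B ⊆ E → ∀ e ∈ E, e ∉ B →
      h (insert e B) - h B ≤ h (insert e A) - h A)
    (S : Finset (V × V)) :
    ∀ n (T : Finset (V × V)), (T \ S).card = n → S ⊆ T → T ⊆ E →
      h T - h S ≤ ∑ e ∈ T \ S, marg h S e := by
  intro n
  induction n with
  | zero =>
    intro T hcard hST hTE
    have : T \ S = ∅ := Finset.card_eq_zero.mp hcard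
    have hTS : T ⊆ S := fun x hx => by
      by_contra hxS
      exact absurd (Finset.mem_sdiff.mpr ⟨hx, hxS⟩) (by simp [this])
    have : T = S := Finset.Subset.antisymm hTS hST
    simp [this]
  | succ n ih =>
    intro T hcard hST hTE
    have hne : (T \ S).Nonempty := Finset.card_pos.mp (by omega)
    obtain ⟨e, he⟩ := hne
    have heT : e ∈ T := (Finset.mem_sdiff.mp he).1
    have heS : e ∉ S := (Finset.mem_sdiff.mp he).2
    set T' := T.erase e with hT'
    have hT'sub : T' ⊆ T := Finset.erase_subset _ _
    have hST' : S ⊆ T' := fun x hx =>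
      Finset.mem_erase.mpr ⟨fun hxe => heS (hxe ▸ hx), hST hx⟩
    have hins : insert e T' = T := Finset.insert_erase heT
    have heT' : e ∉ T' := Finset.notMem_erase _ _
    have hsdiff : T' \ S = (T \ S).erase e := by
      ext x; simp [hT', Finset.mem_erase, Finset.mem_sdiff]; tauto
    have hcard' : (T' \ S).card = n := by
      rw [hsdiff, Finset.card_erase_of_mem he]; omega
    have hstep : h T - h T' ≤ marg h S e := by
      have := hsubmod S T' hST' (hT'sub.trans hTE) e (hTE heT) heT'
      rw [hins] at this
      exact this
    have hrec := ih T' hcard' hST' (hT'sub.trans hTE)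
    have hsum : ∑ x ∈ T \ S, marg h S x
        = marg h S e + ∑ x ∈ (T \ S).erase e, marg h S x :=
      (Finset.add_sum_erase _ _ he).symm
    rw [hsum, ← hsdiff]
    linarith

lemma inducedEdges_subset (E : Finset (V × V)) (σ : List V) :
    inducedEdges E σ ⊆ E := Finset.filter_subset _ _

lemma inducedEdges_append_left (E : Finset (V × V)) (l1 l2 : List V) :
    inducedEdges E l1 ⊆ inducedEdges E (l1 ++ l2) := by
  intro e he
  rw [inducedEdges, Finset.mem_filter] at he ⊢
  refine ⟨he.1, ?_⟩
  rcases he.2 with ⟨i, j, hij, hi, hj⟩ | ⟨hself, hmem⟩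
  · left
    have hlen : l1.length ≤ (l1 ++ l2).length := by simp
    refine ⟨⟨i, lt_of_lt_of_le i.2 hlen⟩, ⟨j, lt_of_lt_of_le j.2 hlen⟩, hij, ?_, ?_⟩
    · simpa [List.get_eq_getElem, List.getElem_append_left i.2] using hi
    · simpa [List.get_eq_getElem, List.getElem_append_left j.2] using hj
  · exact Or.inr ⟨hself, by simp [hmem]⟩

lemma inducedEdges_append_right (E : Finset (V × V)) (l1 l2 : List V) :
    inducedEdges E l2 ⊆ inducedEdges E (l1 ++ l2) := by
  intro e he
  rw [inducedEdges, Finset.mem_filter] at he ⊢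
  refine ⟨he.1, ?_⟩
  rcases he.2 with ⟨i, j, hij, hi, hj⟩ | ⟨hself, hmem⟩
  · left
    have hi2 : (i : ℕ) < l2.length := i.2
    have hj2 : (j : ℕ) < l2.length := j.2
    have hij' : (i : ℕ) < (j : ℕ) := hij
    have hi' : l1.length + (i : ℕ) < (l1 ++ l2).length := by
      simp only [List.length_append]; omega
    have hj' : l1.length + (j : ℕ) < (l1 ++ l2).length := by
      simp only [List.length_append]; omega
    refine ⟨⟨l1.length + i, hi'⟩, ⟨l1.length + j, hj'⟩,
      Fin.mk_lt_mk.mpr (by omega), ?_, ?_⟩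
    · have hg := List.getElem_append_right (as := l1) (bs := l2)
        (i := l1.length + (i : ℕ)) (Nat.le_add_right _ _)
        (h₂ := by simpa using hi2)
      simp only [Nat.add_sub_cancel_left] at hg
      rw [List.get_eq_getElem]
      simpa [hg, List.get_eq_getElem] using hi
    · have hg := List.getElem_append_right (as := l1) (bs := l2)
        (i := l1.length + (j : ℕ)) (Nat.le_add_right _ _)
        (h₂ := by simpa using hj2)
      simp only [Nat.add_sub_cancel_left] at hg
      rw [List.get_eq_getElem]
      simpa [hg, List.get_eq_getElem] using hj
  · exact Or.inr ⟨hself, by simp [hmem]⟩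

lemma head_mem_of_new (E : Finset (V × V)) (ρ σ : List V) (e : V × V)
    (hmem : e ∈ inducedEdges E (ρ ++ σ)) (hnot : e ∉ inducedEdges E ρ) :
    e.2 ∈ σ := by
  rw [inducedEdges, Finset.mem_filter] at hmem hnot
  have hE := hmem.1
  rcases hmem.2 with ⟨i, j, hij, hi, hj⟩ | ⟨hself, hall⟩
  · by_cases hjρ : (j : ℕ) < ρ.length
    · exfalso
      apply hnot
      refine ⟨hE, Or.inl ⟨⟨i, by omega⟩, ⟨j, hjρ⟩, hij, ?_, ?_⟩⟩
      · simpa [List.get_eq_getElem, List.getElem_append_left (by omega : (i:ℕ) < ρ.length)]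
          using hi
      · simpa [List.get_eq_getElem, List.getElem_append_left hjρ] using hj
    · have hjlen : (j : ℕ) < ρ.length + σ.length := by simpa using j.2
      have := List.getElem_append_right (as := ρ) (bs := σ) (i := (j : ℕ))
        (by omega) (h₂ := by omega)
      rw [List.get_eq_getElem, this] at hj
      rw [← hj]
      exact List.getElem_mem _
  · rcases List.mem_append.mp hall with hρ | hσ
    · exact absurd ⟨hE, Or.inr ⟨hself, hρ⟩⟩ hnot
    · exact hself ▸ hσ

/-- Key per-step inequality in the proof of Lemma 2: a greedy step via an edge `e` with
head `v` whose marginal gain dominates that of every edge with head outside `ρ` captures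
at least a `1/(d_in·k)` fraction of the gap between `f(ρ)` and the value of any
length-`≤ k` sequence disjoint from `ρ`. -/
theorem greedy_step_gap_bound
    (E : Finset (V × V)) (h : Finset (V × V) → ℝ)
    (h0 : h ∅ = 0) (hnn : ∀ S ⊆ E, 0 ≤ h S)
    (hmono : ∀ A B : Finset (V × V), A ⊆ B → B ⊆ E → h A ≤ h B)
    (hsubmod : ∀ A B : Finset (V × V), A ⊆ B → B ⊆ E → ∀ e ∈ E, e ∉ B →
      h (insert e B) - h B ≤ h (insert e A) - h A)
    (k : ℕ) (hk : 1 ≤ k) (hdIn : 1 ≤ dIn E)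
    (ρ : List V) (hρ : ρ.Nodup) (v : V) (hv : v ∉ ρ)
    (e : V × V) (he : e ∈ E) (hhead : e.2 = v)
    (hemax : ∀ e' ∈ E, e'.2 ∉ ρ →
      marg h (inducedEdges E ρ) e' ≤ marg h (inducedEdges E ρ) e)
    (hgain : fval E h (ρ ++ [v]) - fval E h ρ ≥ marg h (inducedEdges E ρ) e)
    (σstar : List V) (hstar_nodup : σstar.Nodup) (hstar_len : σstar.length ≤ k)
    (hstar_disj : ∀ u ∈ σstar, u ∉ ρ) :
    fval E h (ρ ++ [v]) - fval E h ρ ≥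
      (1 / ((dIn E : ℝ) * (k : ℝ))) * (fval E h σstar - fval E h ρ) := by
  classical
  set S := inducedEdges E ρ with hS
  set T := inducedEdges E (ρ ++ σstar) with hT
  set gain := fval E h (ρ ++ [v]) - fval E h ρ with hgdef
  have hSE : S ⊆ E := inducedEdges_subset E ρ
  have hTE : T ⊆ E := inducedEdges_subset E (ρ ++ σstar)
  have hST : S ⊆ T := inducedEdges_append_left E ρ σstar
  -- gain ≥ 0
  have hgain0 : 0 ≤ gain := by
    have := hmono S (inducedEdges E (ρ ++ [v]))
      (inducedEdges_append_left E ρ [v]) (inducedEdges_subset E _)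
    simp only [hgdef, fval]
    linarith
  -- marg e ≤ gain
  have hme : marg h S e ≤ gain := hgain
  -- each edge in T \ S has marginal ≤ gain
  have hterm : ∀ e' ∈ T \ S, marg h S e' ≤ gain := by
    intro e' he'
    have hmem := Finset.mem_sdiff.mp he'
    have hhead' : e'.2 ∈ σstar := head_mem_of_new E ρ σstar e' hmem.1 hmem.2
    have : marg h S e' ≤ marg h S e :=
      hemax e' (hTE hmem.1) (hstar_disj _ hhead')
    linarith
  -- telescoping
  have htel : h T - h S ≤ ∑ e' ∈ T \ S, marg h S e' :=
    tele_bound E h hsubmod S _ T rfl hST hTE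
  -- sum bound
  have hsum : ∑ e' ∈ T \ S, marg h S e' ≤ ((T \ S).card : ℝ) * gain := by
    calc ∑ e' ∈ T \ S, marg h S e' ≤ ∑ _e' ∈ T \ S, gain :=
          Finset.sum_le_sum hterm
      _ = ((T \ S).card : ℝ) * gain := by
          rw [Finset.sum_const, nsmul_eq_mul]
  -- card bound
  have hcard : (T \ S).card ≤ dIn E * k := by
    have hsub : T \ S ⊆ E.filter fun e' => e'.2 ∈ σstar.toFinset := by
      intro e' he'
      have hmem := Finset.mem_sdiff.mp he'
      exact Finset.mem_filter.mpr ⟨hTE hmem.1,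
        List.mem_toFinset.mpr (head_mem_of_new E ρ σstar e' hmem.1 hmem.2)⟩
    have hbi : (E.filter fun e' => e'.2 ∈ σstar.toFinset)
        ⊆ σstar.toFinset.biUnion fun u => E.filter fun e' => e'.2 = u := by
      intro e' he'
      have := Finset.mem_filter.mp he'
      exact Finset.mem_biUnion.mpr ⟨e'.2, this.2, Finset.mem_filter.mpr ⟨this.1, rfl⟩⟩
    calc (T \ S).card ≤ (σstar.toFinset.biUnion fun u =>
            E.filter fun e' => e'.2 = u).card :=
          Finset.card_le_card (hsub.trans hbi)
      _ ≤ ∑ u ∈ σstar.toFinset, (E.filter fun e' => e'.2 = u).card :=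
          Finset.card_biUnion_le
      _ ≤ ∑ _u ∈ σstar.toFinset, dIn E :=
          Finset.sum_le_sum fun u _ =>
            Finset.le_sup (f := fun w => (E.filter fun e' => e'.2 = w).card)
              (Finset.mem_univ u)
      _ = σstar.toFinset.card * dIn E := by rw [Finset.sum_const, smul_eq_mul]
      _ ≤ k * dIn E := by
          exact Nat.mul_le_mul_right _ (le_trans σstar.toFinset_card_le hstar_len)
      _ = dIn E * k := Nat.mul_comm _ _
  -- f(σstar) - f(ρ) ≤ h T - h S
  have hfσ : fval E h σstar - fval E h ρ ≤ h T - h S := by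
    have := hmono (inducedEdges E σstar) T (inducedEdges_append_right E ρ σstar) hTE
    simp only [fval, hS, hT]
    linarith
  -- combine
  have hdk1 : (1 : ℝ) ≤ (dIn E : ℝ) * (k : ℝ) := by
    have : 1 * 1 ≤ (dIn E) * k := Nat.mul_le_mul hdIn hk
    exact_mod_cast by simpa using this
  have hdkpos : (0 : ℝ) < (dIn E : ℝ) * (k : ℝ) := lt_of_lt_of_le one_pos hdk1
  have hmain : fval E h σstar - fval E h ρ ≤ ((dIn E : ℝ) * (k : ℝ)) * gain := by
    have hc : ((T \ S).card : ℝ) ≤ (dIn E : ℝ) * (k : ℝ) := by exact_mod_cast hcard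
    have : ((T \ S).card : ℝ) * gain ≤ ((dIn E : ℝ) * (k : ℝ)) * gain :=
      mul_le_mul_of_nonneg_right hc hgain0
    linarith
  rw [ge_iff_le, one_div, inv_mul_eq_div, div_le_iff₀ hdkpos]
  nlinarith [hmain]


end RoseNets
end

section
/- Let A > 1, m ≥ 1, and s ∈ (0,1] be reals and set β = 1 + m. Then for every real q with 0 < q ≤ 1/m: max{ q·(A−1)/(A − s·q), (1 − m·q)·(A−1)/(A − s·q) } ≥ (A−1)/(β·A − s). -/
/-- Inequality 4 in the proof of Theorem 2: for `A > 1`, `m ≥ 1`, `s ∈ (0,1]`,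
`β = 1 + m` and `0 < q ≤ 1/m`,
`max{q·(A−1)/(A−s·q), (1−m·q)·(A−1)/(A−s·q)} ≥ (A−1)/(β·A − s)`. -/
theorem max_ratio_ge' (A m s : ℝ) (hA : 1 < A) (hm : 1 ≤ m) (hs0 : 0 < s) (hs1 : s ≤ 1)
    (q : ℝ) (hq0 : 0 < q) (hq : q ≤ 1 / m) :
    max (q * (A - 1) / (A - s * q)) ((1 - m * q) * (A - 1) / (A - s * q)) ≥
      (A - 1) / ((1 + m) * A - s) := by
  have hm0 : (0:ℝ) < m := lt_of_lt_of_le one_pos hm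
  have hqm : m * q ≤ 1 := by
    rw [div_eq_mul_inv, one_mul] at hq
    calc m * q ≤ m * m⁻¹ := by nlinarith
      _ = 1 := mul_inv_cancel₀ hm0.ne'
  have hsq : s * q ≤ 1 := by nlinarith
  have hden1 : 0 < A - s * q := by linarith
  have hden2 : 0 < (1 + m) * A - s := by nlinarith
  have hA1 : 0 < A - 1 := by linarith
  rcases le_or_gt (1/(1+m)) q with h | h
  · refine le_max_of_le_left ?_
    rw [div_le_div_iff₀ hden2 hden1]
    have h1 : 1 ≤ q * (1 + m) := by
      rw [div_le_iff₀ (by linarith : (0:ℝ) < 1 + m)] at h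
      linarith
    nlinarith [mul_nonneg (mul_nonneg hA1.le (by linarith : (0:ℝ) ≤ A)) (by linarith : (0:ℝ) ≤ q * (1 + m) - 1)]
  · refine le_max_of_le_right ?_
    rw [div_le_div_iff₀ hden2 hden1]
    have h1 : q * (1 + m) ≤ 1 := by
      rw [lt_div_iff₀ (by linarith : (0:ℝ) < 1 + m)] at h
      linarith
    nlinarith [mul_nonneg (mul_nonneg hA1.le (by linarith : (0:ℝ) ≤ 1 - q * (1 + m))) (by nlinarith : (0:ℝ) ≤ m * A - s)]
end
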